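/- For every compact metric space S, every k ∈ ℕ, and all continuous f_1, …, f_k : S → ℝ there exists a constant C ∈ (0,∞), depending only on f_1, …, f_k, such that for every finite set E with #E ≥ 2, every irreducible stochastic kernel q on E with zero trace and stationary π, and every ξ ∈ S^E, with φ(λ) = Π_{i=1}^k ⟨f_i,λ⟩: |L_VM(φ∘m)(ξ)| ≤ C Σ_{x,y∈E} π(x)² q(x,y) 1_{{ξ(x) ≠ ξ(y)}}. -/

import Mathlib

/-!
Since `⟨g, m(ξ^{x,y})⟩ = ⟨g, m(ξ)⟩ + π(x) (g(ξ y) - g(ξ x))`, each term of `L_VM (φ ∘ m) ξ` is the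
increment of the product `∏ ⟨f_i, m(ξ)⟩` under a perturbation of size `π(x)`, and it vanishes
when `ξ(x) = ξ(y)`. The first-order part of that increment is `π(x) (H(y) - H(x))` for one
function `H` on `E`, and these parts cancel in the sum over `x, y` because `π` is stationary for
`q`. The second-order remainder is at most `π(x)² ∏ 3 ‖f_i‖` (with `‖f_i‖ + 1` in place of `‖f_i‖`
to keep the constant positive).
-/

open MeasureTheory Finset
open scoped Classical

universe u

/-- Empirical measure `m(ξ) = ∑_{x∈E} π(x) δ_{ξ(x)}`. -/
noncomputable def empMeas {E S : Type*} [Fintype E] [MeasurableSpace S]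
    (π : E → ℝ) (ξ : E → S) : Measure S :=
  ∑ x : E, (ENNReal.ofReal (π x)) • Measure.dirac (ξ x)

/-- Voting generator `L_VM F(ξ) = ∑_{x,y} q(x,y)[F(ξ^{x,y}) − F(ξ)]`. -/
noncomputable def LVM {E S : Type*} [Fintype E] [DecidableEq E]
    (q : E → E → ℝ) (F : (E → S) → ℝ) (ξ : E → S) : ℝ :=
  ∑ x : E, ∑ y : E, q x y * (F (Function.update ξ x (ξ y)) - F ξ)

theorem abs_add_mul_le_add {a e M N t : ℝ} (ht : |t| ≤ 1) (ha : |a| ≤ M) (he : |e| ≤ N) :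
    |a + t * e| ≤ M + N := by
  have hte : |t * e| ≤ N := abs_mul t e ▸ (mul_le_of_le_one_left (abs_nonneg e) ht).trans he
  exact (abs_add_le _ _).trans (add_le_add ha hte)

section ProductExpansion

variable {ι : Type*} {a e M N : ι → ℝ} {t : ℝ}

theorem abs_prod_add_mul_le (s : Finset ι) (ht : |t| ≤ 1)
    (ha : ∀ i ∈ s, |a i| ≤ M i) (he : ∀ i ∈ s, |e i| ≤ N i) :
    |∏ i ∈ s, (a i + t * e i)| ≤ ∏ i ∈ s, (M i + N i) := by
  rw [abs_prod]
  exact prod_le_prod (fun i _ => abs_nonneg _)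
    fun i hi => abs_add_mul_le_add ht (ha i hi) (he i hi)

theorem abs_prod_add_mul_sub_prod_le (s : Finset ι) (ht : |t| ≤ 1)
    (ha : ∀ i ∈ s, |a i| ≤ M i) (he : ∀ i ∈ s, |e i| ≤ N i) :
    |∏ i ∈ s, (a i + t * e i) - ∏ i ∈ s, a i| ≤ |t| * ∏ i ∈ s, (M i + N i) := by
  induction s using Finset.cons_induction with
  | empty => simp
  | cons x s hx ih =>
    simp only [forall_mem_cons] at ha he
    set P := ∏ i ∈ s, (a i + t * e i)
    set A := ∏ i ∈ s, a i
    set Q := ∏ i ∈ s, (M i + N i)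
    have hP : |P| ≤ Q := abs_prod_add_mul_le s ht ha.2 he.2
    have hPA : |P - A| ≤ |t| * Q := ih ha.2 he.2
    rw [prod_cons, prod_cons, prod_cons]
    calc |(a x + t * e x) * P - a x * A| = |a x * (P - A) + t * (e x * P)| := by ring_nf
      _ ≤ |a x * (P - A)| + |t * (e x * P)| := abs_add_le _ _
      _ = |a x| * |P - A| + |t| * (|e x| * |P|) := by simp only [abs_mul]
      _ ≤ M x * (|t| * Q) + |t| * (N x * Q) := by
        gcongr
        exacts [(abs_nonneg _).trans ha.1, ha.1, (abs_nonneg _).trans he.1, he.1]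
      _ = |t| * ((M x + N x) * Q) := by ring

theorem abs_prod_add_mul_sub_prod_sub_linear_le [DecidableEq ι] (s : Finset ι) (ht : |t| ≤ 1)
    (ha : ∀ i ∈ s, |a i| ≤ M i) (he : ∀ i ∈ s, |e i| ≤ N i) :
    |∏ i ∈ s, (a i + t * e i) - ∏ i ∈ s, a i - t * ∑ i ∈ s, e i * ∏ j ∈ s.erase i, a j|
      ≤ t ^ 2 * ∏ i ∈ s, (M i + N i) := by
  induction s using Finset.cons_induction with
  | empty => simpa using sq_nonneg t
  | cons x s hx ih =>
    simp only [forall_mem_cons] at ha he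
    set P := ∏ i ∈ s, (a i + t * e i)
    set A := ∏ i ∈ s, a i
    set L := ∑ i ∈ s, e i * ∏ j ∈ s.erase i, a j
    set Q := ∏ i ∈ s, (M i + N i)
    have hPA : |P - A| ≤ |t| * Q := abs_prod_add_mul_sub_prod_le s ht ha.2 he.2
    have hPAL : |P - A - t * L| ≤ t ^ 2 * Q := ih ha.2 he.2
    have hlin : ∑ i ∈ cons x s hx, e i * ∏ j ∈ (cons x s hx).erase i, a j = e x * A + a x * L := by
      rw [sum_cons, erase_cons, mul_sum]
      congr 1
      refine sum_congr rfl fun i hi => ?_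
      rw [erase_cons_of_ne hx (ne_of_mem_of_not_mem hi hx).symm, prod_cons]
      ring
    rw [prod_cons, prod_cons, prod_cons, hlin]
    calc |(a x + t * e x) * P - a x * A - t * (e x * A + a x * L)|
        = |a x * (P - A - t * L) + t * (e x * (P - A))| := by ring_nf
      _ ≤ |a x * (P - A - t * L)| + |t * (e x * (P - A))| := abs_add_le _ _
      _ = |a x| * |P - A - t * L| + |t| * (|e x| * |P - A|) := by simp only [abs_mul]
      _ ≤ M x * (t ^ 2 * Q) + |t| * (N x * (|t| * Q)) := by
        gcongr
        exacts [(abs_nonneg _).trans ha.1, ha.1, (abs_nonneg _).trans he.1, he.1]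
      _ = t ^ 2 * ((M x + N x) * Q) := by rw [← sq_abs t]; ring

end ProductExpansion

theorem integral_empMeas {E S : Type*} [Fintype E] [MeasurableSpace S] {π : E → ℝ} (hπ : ∀ x, 0 ≤ π x) (ξ : E → S) {g : S → ℝ}
    (hg : StronglyMeasurable g) : ∫ s, g s ∂(empMeas π ξ) = ∑ x, π x * g (ξ x) := by
  have hint : ∀ x, Integrable g (ENNReal.ofReal (π x) • Measure.dirac (ξ x)) := fun x =>
    (integrable_dirac' hg enorm_lt_top).smul_measure ENNReal.ofReal_ne_top
  rw [empMeas, integral_finsetSum_measure fun x _ => hint x]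
  refine sum_congr rfl fun x _ => ?_
  rw [integral_smul_measure, integral_dirac' g _ hg, ENNReal.toReal_ofReal (hπ x), smul_eq_mul]

theorem sum_mul_comp_update {E S : Type*} [Fintype E] [DecidableEq E] (π : E → ℝ) (g : S → ℝ)
    (ξ : E → S) (x : E) (s : S) :
    ∑ z, π z * g (Function.update ξ x s z) = ∑ z, π z * g (ξ z) + π x * (g s - g (ξ x)) := by
  have hdiff : ∀ z, π z * g (Function.update ξ x s z) - π z * g (ξ z)
      = if z = x then π x * (g s - g (ξ x)) else 0 := by
    intro z
    by_cases h : z = x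
    · subst h; simp [mul_sub]
    · simp [h]
  rw [← sub_eq_iff_eq_add', ← sum_sub_distrib, sum_congr rfl fun z _ => hdiff z, sum_ite_eq']
  simp

section Stationary

variable {E : Type*} [Fintype E] {q : E → E → ℝ} {π : E → ℝ}

theorem sum_sum_mul_gradient_eq_zero (hrow : ∀ x, ∑ y, q x y = 1)
    (hstat : ∀ y, ∑ x, π x * q x y = π y) (h : E → ℝ) :
    ∑ x, ∑ y, q x y * (π x * (h y - h x)) = 0 := by
  have hin : ∑ x, ∑ y, q x y * (π x * h y) = ∑ y, π y * h y := by
    rw [sum_comm]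
    refine sum_congr rfl fun y _ => ?_
    rw [← hstat y, sum_mul]
    exact sum_congr rfl fun x _ => by ring
  have hout : ∑ x, ∑ y, q x y * (π x * h x) = ∑ x, π x * h x :=
    sum_congr rfl fun x _ => by rw [← sum_mul, hrow x, one_mul]
  simp only [mul_sub, sum_sub_distrib, hin, hout, sub_self]

theorem LVM_eq_sum_sub_gradient {S : Type*} [DecidableEq E] (hrow : ∀ x, ∑ y, q x y = 1)
    (hstat : ∀ y, ∑ x, π x * q x y = π y) (F : (E → S) → ℝ) (ξ : E → S) (h : E → ℝ) :
    LVM q F ξ = ∑ x, ∑ y, q x y * (F (Function.update ξ x (ξ y)) - F ξ - π x * (h y - h x)) := by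
  rw [← sub_zero (LVM q F ξ), ← sum_sum_mul_gradient_eq_zero hrow hstat h, LVM,
    ← sum_sub_distrib]
  refine sum_congr rfl fun x _ => ?_
  rw [← sum_sub_distrib]
  exact sum_congr rfl fun y _ => by ring

end Stationary

theorem abs_sum_mul_le_of_sum_eq_one {E : Type*} [Fintype E] {π : E → ℝ} (hπ : ∀ x, 0 ≤ π x)
    (hπsum : ∑ x, π x = 1) {b : E → ℝ} {B : ℝ} (hb : ∀ x, |b x| ≤ B) : |∑ x, π x * b x| ≤ B := by
  calc |∑ x, π x * b x| ≤ ∑ x, π x * B := by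
        refine (abs_sum_le_sum_abs _ _).trans (sum_le_sum fun x _ => ?_)
        rw [abs_mul, abs_of_nonneg (hπ x)]
        exact mul_le_mul_of_nonneg_left (hb x) (hπ x)
    _ = B := by rw [← sum_mul, hπsum, one_mul]

section ProductOfLinearStatistics

variable {ι E S : Type*} [Fintype ι] [Fintype E] [DecidableEq E] {q : E → E → ℝ} {π : E → ℝ}
  {g : ι → S → ℝ} {K : ι → ℝ}

theorem abs_prod_update_sub_sub_gradient_le (hπ : ∀ x, 0 ≤ π x) (hπsum : ∑ x, π x = 1)
    (hg : ∀ i s, |g i s| ≤ K i) (ξ : E → S) (x y : E) :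
    let F : (E → S) → ℝ := fun ζ => ∏ i, ∑ z, π z * g i (ζ z)
    let H : E → ℝ := fun z => ∑ i, g i (ξ z) * ∏ j ∈ univ.erase i, ∑ w, π w * g j (ξ w)
    |F (Function.update ξ x (ξ y)) - F ξ - π x * (H y - H x)|
      ≤ π x ^ 2 * (∏ i, 3 * K i) * (if ξ x = ξ y then 0 else 1) := by
  intro F H
  by_cases hxy : ξ x = ξ y
  · simp [F, H, ← hxy]
  have hπ1 : |π x| ≤ 1 := by
    rw [abs_of_nonneg (hπ x), ← hπsum]
    exact single_le_sum (fun z _ => hπ z) (mem_univ x)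
  have hupdate : F (Function.update ξ x (ξ y))
      = ∏ i, (∑ z, π z * g i (ξ z) + π x * (g i (ξ y) - g i (ξ x))) :=
    prod_congr rfl fun i _ => sum_mul_comp_update π (g i) ξ x (ξ y)
  have hgradient : H y - H x
      = ∑ i, (g i (ξ y) - g i (ξ x)) * ∏ j ∈ univ.erase i, ∑ w, π w * g j (ξ w) := by
    simp only [H, ← sum_sub_distrib, sub_mul]
  have hK : ∀ i, K i + 2 * K i = 3 * K i := fun i => by ring
  rw [hupdate, hgradient, if_neg hxy, mul_one, ← prod_congr rfl fun i _ => hK i]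
  refine abs_prod_add_mul_sub_prod_sub_linear_le univ hπ1
    (fun i _ => abs_sum_mul_le_of_sum_eq_one hπ hπsum fun z => hg i (ξ z)) fun i _ => ?_
  calc |g i (ξ y) - g i (ξ x)| ≤ |g i (ξ y)| + |g i (ξ x)| := abs_sub _ _
    _ ≤ 2 * K i := by linarith [hg i (ξ y), hg i (ξ x)]

theorem abs_LVM_prod_le (hq : ∀ x y, 0 ≤ q x y) (hrow : ∀ x, ∑ y, q x y = 1)
    (hπ : ∀ x, 0 ≤ π x) (hπsum : ∑ x, π x = 1) (hstat : ∀ y, ∑ x, π x * q x y = π y)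
    (hg : ∀ i s, |g i s| ≤ K i) (ξ : E → S) :
    |LVM q (fun ζ => ∏ i, ∑ z, π z * g i (ζ z)) ξ|
      ≤ (∏ i, 3 * K i) * ∑ x, ∑ y, π x ^ 2 * q x y * (if ξ x = ξ y then 0 else 1) := by
  rw [LVM_eq_sum_sub_gradient hrow hstat _ ξ
    fun z => ∑ i, g i (ξ z) * ∏ j ∈ univ.erase i, ∑ w, π w * g j (ξ w), mul_sum]
  refine (abs_sum_le_sum_abs _ _).trans (sum_le_sum fun x _ => ?_)
  rw [mul_sum]
  refine (abs_sum_le_sum_abs _ _).trans (sum_le_sum fun y _ => ?_)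
  rw [abs_mul, abs_of_nonneg (hq x y)]
  calc q x y * |_| ≤ q x y * (π x ^ 2 * (∏ i, 3 * K i) * (if ξ x = ξ y then 0 else 1)) :=
        mul_le_mul_of_nonneg_left (abs_prod_update_sub_sub_gradient_le hπ hπsum hg ξ x y) (hq x y)
    _ = _ := by ring

end ProductOfLinearStatistics

/-- Equation (3.22): for `φ(λ) = ∏_{i=1}^k ⟨f_i, λ⟩` there is a constant `C = C_φ` depending
only on `f₁, …, f_k` such that for every finite voter-model setting,
`|L_VM(φ∘m)(ξ)| ≤ C ∑_{x,y} π(x)² q(x,y) 1{ξ(x) ≠ ξ(y)}`. -/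
theorem voter_generator_indicator_bound
    {S : Type*} [MetricSpace S] [CompactSpace S] [MeasurableSpace S] [BorelSpace S]
    (k : ℕ) (f : Fin k → C(S, ℝ)) :
    ∃ C : ℝ, 0 < C ∧
      ∀ (E : Type u) [Fintype E] [DecidableEq E],
        2 ≤ Fintype.card E →
        ∀ (q : E → E → ℝ) (π : E → ℝ),
          (∀ x y, 0 ≤ q x y) → (∀ x, ∑ y, q x y = 1) → (∀ x, q x x = 0) →
          (∀ x y : E, ∃ n : ℕ, 0 < ((Matrix.of q) ^ n) x y) →
          (∀ x, 0 < π x) → (∑ x, π x = 1) →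
          (∀ y, ∑ x, π x * q x y = π y) →
          ∀ ξ : E → S,
            |LVM q (fun ζ => ∏ i : Fin k, ∫ σ, f i σ ∂(empMeas π ζ)) ξ| ≤
              C * ∑ x : E, ∑ y : E,
                π x ^ 2 * q x y * (if ξ x = ξ y then 0 else 1) := by
  refine ⟨∏ i, 3 * (‖f i‖ + 1), prod_pos fun i _ => by positivity, ?_⟩
  intro E _ _ _ q π hq hrow _ _ hπ hπsum hstat ξ
  have hπ0 : ∀ x, 0 ≤ π x := fun x => (hπ x).le
  have hf : ∀ i s, |f i s| ≤ ‖f i‖ + 1 := fun i s =>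
    ((f i).norm_coe_le_norm s).trans (le_add_of_nonneg_right zero_le_one)
  have hmean : (fun ζ => ∏ i, ∫ σ, f i σ ∂(empMeas π ζ)) = fun ζ => ∏ i, ∑ z, π z * f i (ζ z) :=
    funext fun ζ => prod_congr rfl fun i _ =>
      integral_empMeas hπ0 ζ (f i).continuous.stronglyMeasurable
  rw [hmean]
  exact abs_LVM_prod_le hq hrow hπ0 hπsum hstat hf ξ
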